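/- Let N and M be closed subspaces of a complex Hilbert space H in generic position, and let 𝓐 = {T ∈ B(H) : TN ⊆ N, TM ⊆ M}. Then 𝓐 satisfies property (V') if and only if the algebraic sum N + M is a closed subspace of H. -/

import Mathlib

/-!
If `N + M` is closed, it is all of `H` (its orthogonal complement is `Nᗮ ⊓ Mᗮ = 0`), so `H` is
the topological direct sum of `N` and `M`; let `Q` be the bounded projection onto `N` along `M`.
The rank-one operators `(P_N y ⊗ Q x) ∘ Q` and `(P_M y ⊗ (1 - Q) x) ∘ (1 - Q)` lie in `𝓐`, which
bounds `‖Q x‖ ‖P_N y‖` and `‖(1 - Q) x‖ ‖P_M y‖` by multiples of `‖ω_{x,y}|_𝓐‖`. Testing the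
infimum on `L = 0, 1, P_N, P_M` and comparing `‖Q x‖` with `‖(1 - Q) x‖` and `‖P_N y‖` with
`‖P_M y‖` gives property (V').

Conversely, testing `(1 - L) T L = 0` on rank-one `T = v ⊗ w ∈ 𝓐` shows that `L ∈ Lat 𝓐` either
fixes `N` or kills `Mᗮ`, and either fixes `M` or kills `Nᗮ`; by generic position, `L = 1` or `L`
maps `Nᗮ` into `M`. Fix `x = P_{Nᗮ} m ∉ M` with `m ∈ M`. For `y ∈ Nᗮ` the infimum is then at least
`min (‖y‖², dist(x, M)²)`, while `‖ω_{x,y}|_𝓐‖ ≤ ‖m‖ ‖P_M y‖`. So property (V') makes `P_M`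
bounded below on `Nᗮ`, which forces `N + M = H`.
-/

noncomputable section

variable {H : Type*} [NormedAddCommGroup H] [InnerProductSpace ℂ H] [CompleteSpace H]

/-- An orthogonal projection: a self-adjoint idempotent bounded operator. -/
def IsOrthoProj (L : H →L[ℂ] H) : Prop := IsSelfAdjoint L ∧ L * L = L

/-- `Lat 𝓐`: the invariant projection lattice of a set of operators. -/
def latOf (𝓐 : Set (H →L[ℂ] H)) : Set (H →L[ℂ] H) :=
  {L | IsOrthoProj L ∧ ∀ T ∈ 𝓐, (1 - L) * T * L = 0}

/-- `‖ω_{x,y}|_𝓐‖ = sup {|⟨Tx, y⟩| : T ∈ 𝓐, ‖T‖ ≤ 1}`. -/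
def omegaNorm (𝓐 : Set (H →L[ℂ] H)) (x y : H) : ℝ :=
  sSup {r : ℝ | ∃ T ∈ 𝓐, ‖T‖ ≤ 1 ∧ r = ‖(inner ℂ (T x) y : ℂ)‖}

/-- Property (V'): property (V) up to a multiplicative constant `c > 0`. -/
def PropertyV' (𝓐 : Set (H →L[ℂ] H)) : Prop :=
  ∃ c > (0 : ℝ), ∀ x y : H,
    sInf {r : ℝ | ∃ L ∈ latOf 𝓐, r = ‖x - L x‖ ^ 2 + ‖L y‖ ^ 2} ≤ c * omegaNorm 𝓐 x y

open InnerProductSpace Submodule RCLike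
open scoped InnerProductSpace

section Coercive

variable {𝕜 E : Type*} [RCLike 𝕜] [NormedAddCommGroup E] [InnerProductSpace 𝕜 E]
  [CompleteSpace E]

theorem ContinuousLinearMap.surjective_of_coercive (T : E →L[𝕜] E) {c : ℝ} (hc : 0 < c)
    (hT : ∀ z, c * ‖z‖ ^ 2 ≤ re ⟪T z, z⟫_𝕜) : Function.Surjective T := by
  have hbound : ∀ z, ‖z‖ ≤ c⁻¹ * ‖T z‖ := by
    intro z
    rw [le_inv_mul_iff₀ hc]
    rcases (norm_nonneg z).eq_or_lt with hz | hz
    · simp [← hz]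
    · refine le_of_mul_le_mul_right ?_ hz
      calc c * ‖z‖ * ‖z‖ = c * ‖z‖ ^ 2 := by ring
        _ ≤ re ⟪T z, z⟫_𝕜 := hT z
        _ ≤ ‖T z‖ * ‖z‖ := re_inner_le_norm _ _
  have hclosed : IsClosed (T.range : Set E) := by
    rw [LinearMap.coe_range]
    exact (T.antilipschitz_of_bound (K := ⟨c⁻¹, by positivity⟩) hbound).isClosed_range
      T.uniformContinuous
  have := hclosed.completeSpace_coe
  have horth : T.rangeᗮ = ⊥ := by
    refine (Submodule.eq_bot_iff _).2 fun u hu => ?_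
    have h0 : ⟪T u, u⟫_𝕜 = 0 :=
      inner_right_of_mem_orthogonal (LinearMap.mem_range_self (T : E →ₗ[𝕜] E) u) hu
    have := hT u
    rw [h0, map_zero] at this
    exact norm_eq_zero.1 (pow_eq_zero_iff two_ne_zero |>.1 (by nlinarith [sq_nonneg ‖u‖]))
  exact LinearMap.range_eq_top.1 (orthogonal_eq_bot_iff.1 horth)

end Coercive

section Projection

variable {𝕜 E : Type*} [RCLike 𝕜] [NormedAddCommGroup E] [InnerProductSpace 𝕜 E]
  (K : Submodule 𝕜 E) [K.HasOrthogonalProjection]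

lemma Submodule.norm_sub_starProjection_le (z : E) {u : E} (hu : u ∈ K) :
    ‖z - K.starProjection z‖ ≤ ‖z - u‖ := by
  rw [starProjection_minimal]
  exact ciInf_le ⟨0, by rintro _ ⟨v, rfl⟩; exact norm_nonneg _⟩ (⟨u, hu⟩ : K)

lemma Submodule.inner_starProjection_self (y : E) :
    ⟪K.starProjection y, y⟫_𝕜 = (‖K.starProjection y‖ : 𝕜) ^ 2 := by
  calc ⟪K.starProjection y, y⟫_𝕜 = ⟪K.starProjection (K.starProjection y), y⟫_𝕜 := by
        rw [starProjection_eq_self_iff.2 (K.starProjection_apply_mem y)]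
    _ = ⟪K.starProjection y, K.starProjection y⟫_𝕜 := inner_starProjection_left_eq_right K _ _
    _ = _ := inner_self_eq_norm_sq_to_K _

lemma Submodule.norm_inner_apply_le {Q : E →L[𝕜] E} (hQ : ∀ z, Q z ∈ K) (y : E) :
    ‖⟪y, Q y⟫_𝕜‖ ≤ ‖Q‖ * ‖K.starProjection y‖ * ‖y‖ := by
  have h : ⟪y, Q y⟫_𝕜 = ⟪K.starProjection y, Q y⟫_𝕜 := by
    rw [inner_starProjection_left_eq_right, starProjection_eq_self_iff.2 (hQ y)]
  rw [h]
  calc ‖⟪K.starProjection y, Q y⟫_𝕜‖ ≤ ‖K.starProjection y‖ * ‖Q y‖ := norm_inner_le_norm _ _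
    _ ≤ ‖K.starProjection y‖ * (‖Q‖ * ‖y‖) := by gcongr; exact Q.le_opNorm y
    _ = ‖Q‖ * ‖K.starProjection y‖ * ‖y‖ := by ring

lemma norm_le_of_isTopCompl {N M : Submodule 𝕜 E} [N.HasOrthogonalProjection]
    [M.HasOrthogonalProjection] (hc : IsTopCompl N M) (y : E) :
    ‖y‖ ≤ ‖N.projectionL M hc‖ * ‖N.starProjection y‖ +
      ‖M.projectionL N hc.symm‖ * ‖M.starProjection y‖ := by
  have h1 := N.norm_inner_apply_le (projectionL_apply_mem hc) y
  have h2 := M.norm_inner_apply_le (projectionL_apply_mem hc.symm) y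
  have hsq : ‖y‖ * ‖y‖ ≤ ‖⟪y, N.projectionL M hc y⟫_𝕜‖ + ‖⟪y, M.projectionL N hc.symm y⟫_𝕜‖ := by
    calc ‖y‖ * ‖y‖ = re ⟪y, N.projectionL M hc y + M.projectionL N hc.symm y⟫_𝕜 := by
          rw [projectionL_add_projectionL_eq_self, inner_self_eq_norm_mul_norm]
      _ ≤ _ := by rw [inner_add_right, map_add]; gcongr <;> exact re_le_norm _
  rcases (norm_nonneg y).eq_or_lt with h0 | hpos
  · rw [← h0]
    positivity
  · refine le_of_mul_le_mul_right ?_ hpos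
    linarith

end Projection

lemma le_four_mul_of_le_sq {m a u b v k : ℝ} (hk : 1 ≤ k) (ha : 0 ≤ a) (hu : 0 ≤ u)
    (hb : 0 ≤ b) (hv : 0 ≤ v) (hx : m ≤ (a + u) ^ 2) (hy : m ≤ k ^ 2 * (b + v) ^ 2)
    (hN : m ≤ u ^ 2 + b ^ 2) (hM : m ≤ a ^ 2 + v ^ 2) :
    m ≤ 4 * k * (a * b + u * v) := by
  -- `m ≤ 4 max(a, u)²` and `m ≤ 4 k² max(b, v)²`; if the maxima are `a, v` (resp. `u, b`),
  -- multiply `hN` (resp. `hM`) by `m`.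
  have hp : 0 ≤ 4 * k * (a * b + u * v) := by positivity
  rcases le_or_gt m 0 with hm | hm
  · linarith
  suffices m ^ 2 ≤ 16 * k ^ 2 * (a * b + u * v) ^ 2 from
    (pow_le_pow_iff_left₀ hm.le hp two_ne_zero).1 (by linarith)
  have hsq : ∀ {s t : ℝ}, 0 ≤ s → 0 ≤ t → (s + t) ^ 2 ≤ 4 * s ^ 2 ∨ (s + t) ^ 2 ≤ 4 * t ^ 2 := by
    intro s t hs ht
    rcases le_total s t with h | h
    · right; nlinarith
    · left; nlinarith
  have hk2 : 1 ≤ k ^ 2 := one_le_pow₀ hk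
  have hab := mul_nonneg ha hb
  have huv := mul_nonneg hu hv
  have hab2 : (a * b) ^ 2 ≤ (a * b + u * v) ^ 2 := by nlinarith
  have huv2 : (u * v) ^ 2 ≤ (a * b + u * v) ^ 2 := by nlinarith
  have hsum2 : (a * b) ^ 2 + (u * v) ^ 2 ≤ (a * b + u * v) ^ 2 := by nlinarith
  rcases hsq ha hu with hxa | hxu <;> rcases hsq hb hv with hyb | hyv
  · have := mul_le_mul (hx.trans hxa) (hy.trans (mul_le_mul_of_nonneg_left hyb (sq_nonneg k)))
      hm.le (by positivity)
    nlinarith [mul_le_mul_of_nonneg_left hab2 (sq_nonneg k)]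
  · have h1 := mul_le_mul_of_nonneg_left (hx.trans hxa) (sq_nonneg b)
    have h2 := mul_le_mul_of_nonneg_left
      (hy.trans (mul_le_mul_of_nonneg_left hyv (sq_nonneg k))) (sq_nonneg u)
    have h3 := mul_le_mul_of_nonneg_left hN hm.le
    nlinarith [mul_le_mul_of_nonneg_left hsum2 (sq_nonneg k),
      mul_le_mul_of_nonneg_right hk2 (sq_nonneg (a * b))]
  · have h1 := mul_le_mul_of_nonneg_left (hx.trans hxu) (sq_nonneg v)
    have h2 := mul_le_mul_of_nonneg_left
      (hy.trans (mul_le_mul_of_nonneg_left hyb (sq_nonneg k))) (sq_nonneg a)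
    have h3 := mul_le_mul_of_nonneg_left hM hm.le
    nlinarith [mul_le_mul_of_nonneg_left hsum2 (sq_nonneg k),
      mul_le_mul_of_nonneg_right hk2 (sq_nonneg (u * v))]
  · have := mul_le_mul (hx.trans hxu) (hy.trans (mul_le_mul_of_nonneg_left hyv (sq_nonneg k)))
      hm.le (by positivity)
    nlinarith [mul_le_mul_of_nonneg_left huv2 (sq_nonneg k)]

section Sum

variable {𝕜 E : Type*} [RCLike 𝕜] [NormedAddCommGroup E] [InnerProductSpace 𝕜 E]

lemma exists_starProjection_orthogonal_notMem {N M : Submodule 𝕜 E} [N.HasOrthogonalProjection]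
    (hg : Nᗮ ⊓ M = ⊥) (hMN : ¬ M ≤ N) : ∃ m ∈ M, Nᗮ.starProjection m ∉ M := by
  obtain ⟨m, hm, hmN⟩ := SetLike.not_le_iff_exists.1 hMN
  refine ⟨m, hm, fun h => hmN ?_⟩
  have : Nᗮ.starProjection m ∈ Nᗮ ⊓ M := ⟨starProjection_apply_mem _ _, h⟩
  rwa [hg, mem_bot, starProjection_apply_eq_zero_iff, orthogonal_orthogonal] at this

variable [CompleteSpace E]

lemma sup_eq_top_of_isClosed {N M : Submodule 𝕜 E}
    (hcl : IsClosed ((N ⊔ M : Submodule 𝕜 E) : Set E)) (hg : Nᗮ ⊓ Mᗮ = ⊥) : N ⊔ M = ⊤ := by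
  have := hcl.completeSpace_coe
  rw [← orthogonal_eq_bot_iff, ← inf_orthogonal, hg]

/-- The operator `P_N + P_{Nᗮ} P_M P_{Nᗮ}` is coercive, hence onto, and its range lies in
`N + M`. -/
lemma sup_eq_top_of_norm_le_norm_starProjection (N M : Submodule 𝕜 E)
    [N.HasOrthogonalProjection] [M.HasOrthogonalProjection] {C : ℝ} (hC : 0 < C)
    (h : ∀ w ∈ Nᗮ, ‖w‖ ≤ C * ‖M.starProjection w‖) : N ⊔ M = ⊤ := by
  set T : E →L[𝕜] E :=
    N.starProjection + Nᗮ.starProjection ∘L M.starProjection ∘L Nᗮ.starProjection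
  have hcoer : ∀ z, min 1 (C⁻¹ ^ 2) * ‖z‖ ^ 2 ≤ re ⟪T z, z⟫_𝕜 := by
    intro z
    set w := Nᗮ.starProjection z
    have hre : re ⟪T z, z⟫_𝕜 = ‖N.starProjection z‖ ^ 2 + ‖M.starProjection w‖ ^ 2 := by
      have hw : ⟪Nᗮ.starProjection (M.starProjection w), z⟫_𝕜 = ⟪M.starProjection w, w⟫_𝕜 :=
        inner_starProjection_left_eq_right _ _ _
      have hTz : T z = N.starProjection z + Nᗮ.starProjection (M.starProjection w) := rfl
      rw [hTz, inner_add_left, map_add, hw, inner_starProjection_self, inner_starProjection_self]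
      norm_cast
    have hlow : C⁻¹ * ‖w‖ ≤ ‖M.starProjection w‖ := by
      rw [inv_mul_le_iff₀ hC]
      exact h w (starProjection_apply_mem _ z)
    have hpyth := N.norm_sq_eq_add_norm_sq_starProjection z
    have hmin1 := min_le_left 1 (C⁻¹ ^ 2)
    have hmin2 := min_le_right 1 (C⁻¹ ^ 2)
    have hlow2 : (C⁻¹ * ‖w‖) ^ 2 ≤ ‖M.starProjection w‖ ^ 2 := by gcongr
    rw [hre, hpyth]
    nlinarith [sq_nonneg ‖N.starProjection z‖, sq_nonneg ‖w‖]
  have hsurj := T.surjective_of_coercive (by positivity) hcoer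
  refine eq_top_iff'.2 fun z => ?_
  obtain ⟨u, rfl⟩ := hsurj z
  set m := M.starProjection (Nᗮ.starProjection u)
  refine mem_sup.2 ⟨N.starProjection u - N.starProjection m,
    sub_mem (starProjection_apply_mem _ _) (starProjection_apply_mem _ _), m,
    starProjection_apply_mem _ _, ?_⟩
  change _ = N.starProjection u + Nᗮ.starProjection m
  rw [starProjection_orthogonal_val]
  abel

end Sum

variable {E : Type*} [NormedAddCommGroup E] [InnerProductSpace ℂ E]

section OmegaNorm

variable {𝓐 : Set (E →L[ℂ] E)}

lemma omegaNorm_nonneg (𝓐 : Set (E →L[ℂ] E)) (x y : E) : 0 ≤ omegaNorm 𝓐 x y :=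
  Real.sSup_nonneg (by rintro _ ⟨T, -, -, rfl⟩; exact norm_nonneg _)

lemma norm_inner_le_omegaNorm {T : E →L[ℂ] E} (hT : T ∈ 𝓐) (hT1 : ‖T‖ ≤ 1) (x y : E) :
    ‖⟪T x, y⟫_ℂ‖ ≤ omegaNorm 𝓐 x y := by
  refine le_csSup ⟨‖x‖ * ‖y‖, ?_⟩ ⟨T, hT, hT1, rfl⟩
  rintro _ ⟨S, -, hS1, rfl⟩
  calc ‖⟪S x, y⟫_ℂ‖ ≤ ‖S x‖ * ‖y‖ := norm_inner_le_norm _ _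
    _ ≤ ‖x‖ * ‖y‖ := by
        gcongr
        simpa using S.le_of_opNorm_le hS1 x

lemma omegaNorm_le {x y : E} {a : ℝ} (ha : 0 ≤ a)
    (h : ∀ T ∈ 𝓐, ‖T‖ ≤ 1 → ‖⟪T x, y⟫_ℂ‖ ≤ a) : omegaNorm 𝓐 x y ≤ a :=
  Real.sSup_le (by rintro _ ⟨T, hT, hT1, rfl⟩; exact h T hT hT1) ha

lemma norm_inner_le_opNorm_mul_omegaNorm (h𝓐 : ∀ T ∈ 𝓐, ∀ c : ℂ, c • T ∈ 𝓐)
    {T : E →L[ℂ] E} (hT : T ∈ 𝓐) (x y : E) :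
    ‖⟪T x, y⟫_ℂ‖ ≤ ‖T‖ * omegaNorm 𝓐 x y := by
  rcases eq_or_ne T 0 with rfl | hT0
  · simp
  have hpos : 0 < ‖T‖ := norm_pos_iff.2 hT0
  have hunit : ‖(‖T‖⁻¹ : ℂ) • T‖ ≤ 1 := by
    rw [norm_smul, norm_inv, Complex.norm_real, Real.norm_of_nonneg hpos.le,
      inv_mul_cancel₀ hpos.ne']
  have h := norm_inner_le_omegaNorm (h𝓐 T hT _) hunit x y
  rw [FunLike.coe_smul, Pi.smul_apply, inner_smul_left, norm_mul, norm_conj, norm_inv,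
    Complex.norm_real, Real.norm_of_nonneg hpos.le, inv_mul_le_iff₀ hpos] at h
  exact h

end OmegaNorm

section Lat

variable [CompleteSpace E] {𝓐 : Set (E →L[ℂ] E)}

lemma zero_mem_latOf : (0 : E →L[ℂ] E) ∈ latOf 𝓐 :=
  ⟨⟨IsSelfAdjoint.zero _, zero_mul 0⟩, fun _ _ => by simp⟩

lemma one_mem_latOf : (1 : E →L[ℂ] E) ∈ latOf 𝓐 :=
  ⟨⟨IsSelfAdjoint.one _, one_mul 1⟩, fun _ _ => by simp⟩

lemma starProjection_mem_latOf (K : Submodule ℂ E) [K.HasOrthogonalProjection]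
    (h : ∀ T ∈ 𝓐, Set.MapsTo T K K) : K.starProjection ∈ latOf 𝓐 := by
  refine ⟨⟨isSelfAdjoint_starProjection K, K.isIdempotentElem_starProjection.eq⟩,
    fun T hT => ContinuousLinearMap.ext fun z => ?_⟩
  have hTz : T (K.starProjection z) ∈ K := h T hT (K.starProjection_apply_mem z)
  simp [starProjection_eq_self_iff.2 hTz]

lemma sInf_latOf_le {L : E →L[ℂ] E} (hL : L ∈ latOf 𝓐) (x y : E) :
    sInf {r : ℝ | ∃ L ∈ latOf 𝓐, r = ‖x - L x‖ ^ 2 + ‖L y‖ ^ 2} ≤ ‖x - L x‖ ^ 2 + ‖L y‖ ^ 2 :=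
  csInf_le ⟨0, by rintro _ ⟨L', -, rfl⟩; positivity⟩ ⟨L, hL, rfl⟩

lemma le_sInf_latOf {x y : E} {a : ℝ} (h : ∀ L ∈ latOf 𝓐, a ≤ ‖x - L x‖ ^ 2 + ‖L y‖ ^ 2) :
    a ≤ sInf {r : ℝ | ∃ L ∈ latOf 𝓐, r = ‖x - L x‖ ^ 2 + ‖L y‖ ^ 2} :=
  le_csInf ⟨_, 1, one_mem_latOf, rfl⟩ (by rintro _ ⟨L, hL, rfl⟩; exact h L hL)

lemma latOf_fixes_or_annihilates {L : E →L[ℂ] E} (hL : L ∈ latOf 𝓐) {K K' : Set E}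
    (h : ∀ v ∈ K, ∀ w ∈ K', rankOne ℂ v w ∈ 𝓐) :
    (∀ v ∈ K, L v = v) ∨ ∀ w ∈ K', L w = 0 := by
  by_contra! ⟨⟨v, hv, hLv⟩, w, hw, hLw⟩
  refine hLw (ext_inner_right ℂ fun z => ?_)
  have hz := DFunLike.congr_fun (hL.2 _ (h v hv w hw)) z
  simp only [mul_apply_eq_comp, rankOne_apply, map_smul, sub_apply, one_apply_eq_self, zero_apply,
    smul_eq_zero, sub_eq_zero] at hz
  rw [inner_zero_left, ← hL.1.1.adjoint_eq, ContinuousLinearMap.adjoint_inner_left]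
  exact hz.resolve_right (Ne.symm hLv)

end Lat

section Invariant

variable (N M : Submodule ℂ E)

/-- The algebra `𝓐` of the theorem. -/
def invariantOps : Set (E →L[ℂ] E) :=
  {T | Set.MapsTo T (N : Set E) (N : Set E) ∧ Set.MapsTo T (M : Set E) (M : Set E)}

lemma invariantOps_comm : invariantOps M N = invariantOps N M := by
  ext T
  exact and_comm

variable {N M}

lemma smul_mem_invariantOps {T : E →L[ℂ] E} (hT : T ∈ invariantOps N M) (c : ℂ) :
    c • T ∈ invariantOps N M :=
  ⟨fun _ hz => N.smul_mem c (hT.1 hz), fun _ hz => M.smul_mem c (hT.2 hz)⟩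

lemma rankOne_mem_invariantOps {v w : E} (hv : v ∈ N) (hw : w ∈ Mᗮ) :
    rankOne ℂ v w ∈ invariantOps N M := by
  refine ⟨fun z _ => N.smul_mem _ hv, fun z hz => ?_⟩
  simp [inner_left_of_mem_orthogonal hz hw]

lemma omegaNorm_invariantOps_le [N.HasOrthogonalProjection]
    [M.HasOrthogonalProjection] {m y : E} (hm : m ∈ M) (hy : y ∈ Nᗮ) :
    omegaNorm (invariantOps N M) (Nᗮ.starProjection m) y ≤ ‖m‖ * ‖M.starProjection y‖ := by
  refine omegaNorm_le (by positivity) fun T hT hT1 => ?_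
  have hN : ⟪T (N.starProjection m), y⟫_ℂ = 0 :=
    inner_right_of_mem_orthogonal (hT.1 (starProjection_apply_mem _ _)) hy
  have hM : ⟪T m, y⟫_ℂ = ⟪T m, M.starProjection y⟫_ℂ := by
    rw [← inner_starProjection_left_eq_right, starProjection_eq_self_iff.2 (hT.2 hm)]
  rw [starProjection_orthogonal_val, map_sub, inner_sub_left, hN, sub_zero, hM]
  calc ‖⟪T m, M.starProjection y⟫_ℂ‖ ≤ ‖T m‖ * ‖M.starProjection y‖ := norm_inner_le_norm _ _
    _ ≤ ‖m‖ * ‖M.starProjection y‖ := by gcongr; simpa using T.le_of_opNorm_le hT1 m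

lemma norm_mul_norm_starProjection_le_omegaNorm [N.HasOrthogonalProjection] {G : E →L[ℂ] E}
    (hG : ∀ m ∈ M, G m = 0) (x y : E) :
    ‖G x‖ * ‖N.starProjection y‖ ≤ ‖G‖ * omegaNorm (invariantOps N M) x y := by
  set S := rankOne ℂ (N.starProjection y) (G x) ∘L G
  have hS : S ∈ invariantOps N M :=
    ⟨fun _ _ => N.smul_mem _ (starProjection_apply_mem _ _), fun z hz => by simp [S, hG z hz]⟩
  have hSx : ⟪S x, y⟫_ℂ = ((‖G x‖ * ‖N.starProjection y‖) ^ 2 : ℝ) := by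
    simp only [S, ContinuousLinearMap.comp_apply, rankOne_apply, inner_smul_left,
      inner_self_eq_norm_sq_to_K, inner_starProjection_self]
    simp
    ring
  have hSnorm : ‖S‖ ≤ ‖N.starProjection y‖ * ‖G x‖ * ‖G‖ :=
    (ContinuousLinearMap.opNorm_comp_le _ _).trans (by rw [norm_rankOne])
  have h := norm_inner_le_opNorm_mul_omegaNorm (fun T hT c => smul_mem_invariantOps hT c) hS x y
  rw [hSx, Complex.norm_real, Real.norm_of_nonneg (by positivity)] at h
  have hW := omegaNorm_nonneg (invariantOps N M) x y
  -- with `p = ‖G x‖ ‖P_N y‖`: `p ^ 2 ≤ ‖S‖ W ≤ p ‖G‖ W`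
  nlinarith [mul_le_mul_of_nonneg_right hSnorm hW, norm_nonneg (G x),
    norm_nonneg (N.starProjection y), mul_nonneg (norm_nonneg G) hW]

variable [CompleteSpace E]

lemma latOf_invariantOps_eq_one_or [M.HasOrthogonalProjection] (hg : Nᗮ ⊓ Mᗮ = ⊥)
    {L : E →L[ℂ] E} (hL : L ∈ latOf (invariantOps N M)) : L = 1 ∨ ∀ x ∈ Nᗮ, L x ∈ M := by
  have hNM := latOf_fixes_or_annihilates hL (K := N) (K' := Mᗮ)
    fun v hv w hw => rankOne_mem_invariantOps hv hw
  have hMN := latOf_fixes_or_annihilates hL (K := M) (K' := Nᗮ)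
    fun v hv w hw => invariantOps_comm N M ▸ rankOne_mem_invariantOps hv hw
  rcases hMN with hM | hN'
  · rcases hNM with hN | hM'
    · left
      refine ContinuousLinearMap.ext_on (s := (N : Set E) ∪ M) ?_ ?_
      · rw [span_union, span_eq, span_eq, dense_iff_topologicalClosure_eq_top,
          topologicalClosure_eq_top_iff, ← inf_orthogonal, hg]
      · rintro z (hz | hz)
        · simp [hN z hz]
        · simp [hM z hz]
    · right
      intro x _
      have hLx : L x = M.starProjection x := by
        conv_lhs => rw [← add_sub_cancel (M.starProjection x) x]
        rw [map_add, hM _ (starProjection_apply_mem _ _),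
          hM' _ (sub_starProjection_mem_orthogonal _), add_zero]
      exact hLx ▸ starProjection_apply_mem _ _
  · right
    intro x hx
    rw [hN' x hx]
    exact M.zero_mem

lemma sq_norm_le_sInf_latOf_invariantOps [M.HasOrthogonalProjection] (hg : Nᗮ ⊓ Mᗮ = ⊥)
    {x y : E} (hx : x ∈ Nᗮ) (hxy : ‖y‖ ≤ ‖x - M.starProjection x‖) :
    ‖y‖ ^ 2 ≤ sInf {r : ℝ | ∃ L ∈ latOf (invariantOps N M), r = ‖x - L x‖ ^ 2 + ‖L y‖ ^ 2} := by
  refine le_sInf_latOf fun L hL => ?_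
  rcases latOf_invariantOps_eq_one_or hg hL with rfl | hLM
  · simp
  · have := pow_le_pow_left₀ (norm_nonneg y)
      (hxy.trans (M.norm_sub_starProjection_le x (hLM x hx))) 2
    nlinarith [sq_nonneg ‖L y‖]

lemma isClosed_sup_of_propertyV'
    (hN : IsClosed (N : Set E)) (hM : IsClosed (M : Set E)) (hg₂ : Nᗮ ⊓ M = ⊥)
    (hg₄ : Nᗮ ⊓ Mᗮ = ⊥) (hV : PropertyV' (invariantOps N M)) :
    IsClosed ((N ⊔ M : Submodule ℂ E) : Set E) := by
  have := hN.completeSpace_coe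
  have := hM.completeSpace_coe
  by_cases hMN : M ≤ N
  · rwa [sup_eq_left.2 hMN]
  obtain ⟨m, hm, hx₀M⟩ := exists_starProjection_orthogonal_notMem hg₂ hMN
  set x₀ := Nᗮ.starProjection m
  set d := ‖x₀ - M.starProjection x₀‖
  have hd : 0 < d :=
    norm_pos_iff.2 (sub_ne_zero.2 fun h => hx₀M (starProjection_eq_self_iff.1 h.symm))
  have hm0 : 0 < ‖m‖ := norm_pos_iff.2 fun h => hx₀M (by simp [x₀, h])
  obtain ⟨c, hc, hcV⟩ := hV
  suffices N ⊔ M = ⊤ by rw [this, top_coe]; exact isClosed_univ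
  refine sup_eq_top_of_norm_le_norm_starProjection N M (C := c * ‖m‖ / d) (by positivity)
    fun y hy => ?_
  -- rescale `m` so that the corresponding vector of `Nᗮ` lies at distance `‖y‖` from `M`
  set t : ℂ := ((‖y‖ / d : ℝ) : ℂ)
  have ht : ‖t‖ = ‖y‖ / d := by
    rw [Complex.norm_real, Real.norm_of_nonneg (by positivity)]
  have hgap : ‖y‖ ≤ ‖Nᗮ.starProjection (t • m) - M.starProjection (Nᗮ.starProjection (t • m))‖ := by
    rw [map_smul, map_smul, ← smul_sub, norm_smul, ht, div_mul_cancel₀ _ hd.ne']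
  have key := (sq_norm_le_sInf_latOf_invariantOps hg₄ (starProjection_apply_mem _ _) hgap).trans
    ((hcV _ y).trans (mul_le_mul_of_nonneg_left (omegaNorm_invariantOps_le (M.smul_mem t hm) hy)
      hc.le))
  rw [norm_smul, ht] at key
  rcases (norm_nonneg y).eq_or_lt with h0 | hpos
  · rw [← h0]
    positivity
  · refine le_of_mul_le_mul_left ?_ hpos
    calc ‖y‖ * ‖y‖ = ‖y‖ ^ 2 := by ring
      _ ≤ _ := key
      _ = ‖y‖ * (c * ‖m‖ / d * ‖M.starProjection y‖) := by field_simp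

lemma sInf_latOf_invariantOps_le [N.HasOrthogonalProjection]
    [M.HasOrthogonalProjection] (hc : IsTopCompl N M) (x y : E) :
    sInf {r : ℝ | ∃ L ∈ latOf (invariantOps N M), r = ‖x - L x‖ ^ 2 + ‖L y‖ ^ 2} ≤
      4 * (‖N.projectionL M hc‖ + ‖M.projectionL N hc.symm‖ + 1) *
        (‖N.projectionL M hc x‖ * ‖N.starProjection y‖ +
          ‖M.projectionL N hc.symm x‖ * ‖M.starProjection y‖) := by
  set P := N.projectionL M hc
  set P' := M.projectionL N hc.symm
  have hx : ‖x‖ ≤ ‖P x‖ + ‖P' x‖ := by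
    conv_lhs => rw [← projectionL_add_projectionL_eq_self hc x]
    exact norm_add_le _ _
  have hy : ‖y‖ ≤ (‖P‖ + ‖P'‖ + 1) * (‖N.starProjection y‖ + ‖M.starProjection y‖) := by
    refine (norm_le_of_isTopCompl hc y).trans ?_
    nlinarith [norm_nonneg P, norm_nonneg P', norm_nonneg (N.starProjection y),
      norm_nonneg (M.starProjection y)]
  have hxN : ‖x - N.starProjection x‖ ≤ ‖P' x‖ := by
    have := N.norm_sub_starProjection_le x (projectionL_apply_mem hc x)
    rwa [← projectionL_eq_self_sub_projectionL hc] at this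
  have hxM : ‖x - M.starProjection x‖ ≤ ‖P x‖ := by
    have := M.norm_sub_starProjection_le x (projectionL_apply_mem hc.symm x)
    rwa [← projectionL_eq_self_sub_projectionL hc.symm] at this
  have h0 := sInf_latOf_le (zero_mem_latOf (𝓐 := invariantOps N M)) x y
  have h1 := sInf_latOf_le (one_mem_latOf (𝓐 := invariantOps N M)) x y
  have hLN := sInf_latOf_le
    (starProjection_mem_latOf (𝓐 := invariantOps N M) N fun _ hT => hT.1) x y
  have hLM := sInf_latOf_le
    (starProjection_mem_latOf (𝓐 := invariantOps N M) M fun _ hT => hT.2) x y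
  simp only [zero_apply, sub_zero, norm_zero, one_apply_eq_self, sub_self] at h0 h1
  refine le_four_mul_of_le_sq (by linarith [norm_nonneg P, norm_nonneg P'])
    (norm_nonneg _) (norm_nonneg _) (norm_nonneg _) (norm_nonneg _) ?_ ?_
    (hLN.trans (by gcongr)) (hLM.trans (by gcongr))
  · exact h0.trans (by simpa using pow_le_pow_left₀ (norm_nonneg x) hx 2)
  · exact h1.trans (by simpa [mul_pow] using pow_le_pow_left₀ (norm_nonneg y) hy 2)

lemma propertyV'_of_isClosed_sup
    (hN : IsClosed (N : Set E)) (hM : IsClosed (M : Set E)) (hg₁ : N ⊓ M = ⊥)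
    (hg₄ : Nᗮ ⊓ Mᗮ = ⊥) (hcl : IsClosed ((N ⊔ M : Submodule ℂ E) : Set E)) :
    PropertyV' (invariantOps N M) := by
  have := hN.completeSpace_coe
  have := hM.completeSpace_coe
  have hc : IsTopCompl N M := IsCompl.isTopCompl_of_isClosed
    ⟨disjoint_iff.2 hg₁, codisjoint_iff.2 (sup_eq_top_of_isClosed hcl hg₄)⟩ hN hM
  set P := N.projectionL M hc
  set P' := M.projectionL N hc.symm
  set k := ‖P‖ + ‖P'‖ + 1
  refine ⟨4 * k ^ 2, by positivity, fun x y => ?_⟩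
  set W := omegaNorm (invariantOps N M) x y
  have hab : ‖P x‖ * ‖N.starProjection y‖ ≤ ‖P‖ * W :=
    norm_mul_norm_starProjection_le_omegaNorm (fun _ => (projectionL_apply_eq_zero_iff hc).2) x y
  have huv : ‖P' x‖ * ‖M.starProjection y‖ ≤ ‖P'‖ * W := by
    simpa only [invariantOps_comm] using norm_mul_norm_starProjection_le_omegaNorm (N := M)
      (M := N) (fun _ => (projectionL_apply_eq_zero_iff hc.symm).2) x y
  calc _ ≤ 4 * k * (‖P x‖ * ‖N.starProjection y‖ + ‖P' x‖ * ‖M.starProjection y‖) :=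
        sInf_latOf_invariantOps_le hc x y
    _ ≤ 4 * k * (k * W) := by
        gcongr
        nlinarith [norm_nonneg P, norm_nonneg P', omegaNorm_nonneg (invariantOps N M) x y]
    _ = 4 * k ^ 2 * W := by ring

end Invariant

theorem norms_of_vector_functionals_stmt17_general
    (N M : Submodule ℂ H) (hN : IsClosed (N : Set H)) (hM : IsClosed (M : Set H))
    (hg₁ : N ⊓ M = ⊥) (hg₂ : Nᗮ ⊓ M = ⊥) (hg₄ : Nᗮ ⊓ Mᗮ = ⊥) :
    PropertyV' {T : H →L[ℂ] H |
        Set.MapsTo T (N : Set H) (N : Set H) ∧ Set.MapsTo T (M : Set H) (M : Set H)} ↔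
      IsClosed ((N ⊔ M : Submodule ℂ H) : Set H) :=
  ⟨isClosed_sup_of_propertyV' hN hM hg₂ hg₄, propertyV'_of_isClosed_sup hN hM hg₁ hg₄⟩

/-- For closed subspaces `N, M` of `H` in generic position, the algebra
`𝓐` of operators leaving both `N` and `M` invariant satisfies property (V') if and only
if the algebraic sum `N + M` is closed. -/
theorem norms_of_vector_functionals_stmt17
    (N M : Submodule ℂ H) (hN : IsClosed (N : Set H)) (hM : IsClosed (M : Set H))
    (hg₁ : N ⊓ M = ⊥) (hg₂ : Nᗮ ⊓ M = ⊥) (hg₃ : N ⊓ Mᗮ = ⊥) (hg₄ : Nᗮ ⊓ Mᗮ = ⊥) :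
    PropertyV' {T : H →L[ℂ] H |
        Set.MapsTo T (N : Set H) (N : Set H) ∧ Set.MapsTo T (M : Set H) (M : Set H)} ↔
      IsClosed ((N ⊔ M : Submodule ℂ H) : Set H) :=
  norms_of_vector_functionals_stmt17_general N M hN hM hg₁ hg₂ hg₄
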